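/- arXiv:2302.11476 — 2 statements merged into one kernel-verified Lean document; each statement's English description precedes it below -/
import Mathlib

section
/- If there exists a NOF permutation problem I ⊆ [N]³ whose deterministic NOF communication complexity is at most k, then the zeroing-out subrank of the matrix multiplication tensor satisfies Q_zo(⟨N,N,N⟩) ≥ N²·2^{-k}. -/
open Set

def proj1 {A B C : Type} (S : Set (A × B × C)) : Set A := Prod.fst '' S
def proj2 {A B C : Type} (S : Set (A × B × C)) : Set B := (fun t => t.2.1) '' S
def proj3 {A B C : Type} (S : Set (A × B × C)) : Set C := (fun t => t.2.2) '' S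

def IsPartialPerm {A B C : Type} (S : Set (A × B × C)) : Prop :=
  ∀ t ∈ S, ∀ t' ∈ S, (t.1 = t'.1 ∨ t.2.1 = t'.2.1 ∨ t.2.2 = t'.2.2) → t = t'

def IsIndep {A B C : Type} (I P S : Set (A × B × C)) : Prop :=
  S ⊆ I ∧ IsPartialPerm S ∧ P ∩ (proj1 S ×ˢ (proj2 S ×ˢ proj3 S)) = S

noncomputable def chromatic {A B C : Type} (I P : Set (A × B × C)) : ℕ :=
  sInf {k : ℕ | ∃ f : A × B × C → Fin k, ∀ m : Fin k, IsIndep I P (I ∩ f ⁻¹' {m})}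

/-- The matrix multiplication tensor `⟨N,N,N⟩` over alphabet `[N]`. -/
def MMset (N : ℕ) : Set ((Fin N × Fin N) × (Fin N × Fin N) × (Fin N × Fin N)) :=
  {t | t.1.2 = t.2.1.1 ∧ t.2.1.2 = t.2.2.1 ∧ t.2.2.2 = t.1.1}

/-- Green terms of the NOF problem `L` inside the matrix multiplication tensor. -/
def tild {N : ℕ} (L : Set (Fin N × Fin N × Fin N)) :
    Set ((Fin N × Fin N) × (Fin N × Fin N) × (Fin N × Fin N)) :=
  {t | ∃ x y z : Fin N, (x, y, z) ∈ L ∧ t = ((x, y), (y, z), (z, x))}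

/-- `L` is a NOF permutation problem (Latin square). -/
def IsLatin {N : ℕ} (L : Set (Fin N × Fin N × Fin N)) : Prop :=
  (∀ x y, ∃! z, (x, y, z) ∈ L) ∧ (∀ y z, ∃! x, (x, y, z) ∈ L) ∧ (∀ x z, ∃! y, (x, y, z) ∈ L)

/-- Zeroing-out subrank of `⟨N,N,N⟩`: maximum size of an independent set in the
matrix multiplication tensor (all of whose terms are green). -/
noncomputable def QzoMM (N : ℕ) : ℕ :=
  sSup {k : ℕ | ∃ S, IsIndep (MMset N) (MMset N) S ∧ S.ncard = k}

lemma tild_subset_MM {N : ℕ} (L : Set (Fin N × Fin N × Fin N)) :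
    tild L ⊆ MMset N := by
  rintro t ⟨x, y, z, -, rfl⟩
  exact ⟨rfl, rfl, rfl⟩

lemma indep_of_subsingleton {N : ℕ} (L : Set (Fin N × Fin N × Fin N))
    (S : Set ((Fin N × Fin N) × (Fin N × Fin N) × (Fin N × Fin N)))
    (hS : S ⊆ tild L) (h : S.Subsingleton) : IsIndep (tild L) (MMset N) S := by
  refine ⟨hS, fun t ht t' ht' _ => h ht ht', ?_⟩
  ext u
  constructor
  · intro hu
    simp only [Set.mem_inter_iff, Set.mem_prod, proj1, proj2, proj3, Set.mem_image] at hu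
    obtain ⟨-, ⟨s1, hs1, h1⟩, ⟨s2, hs2, h2⟩, ⟨s3, hs3, h3⟩⟩ := hu
    have e2 : s2 = s1 := h hs2 hs1
    have e3 : s3 = s1 := h hs3 hs1
    rw [e2] at h2; rw [e3] at h3
    have : u = s1 := by
      refine Prod.ext h1.symm (Prod.ext h2.symm h3.symm)
    rw [this]; exact hs1
  · intro hu
    exact ⟨tild_subset_MM L (hS hu), ⟨u, hu, rfl⟩, ⟨u, hu, rfl⟩, ⟨u, hu, rfl⟩⟩

/-- If some NOF permutation problem over `[N]³` has deterministic NOF communication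
complexity (`= ⌈log₂ χ(Ĩ,⟨N,N,N⟩)⌉`) at most `k`, then
`Q_zo(⟨N,N,N⟩) ≥ N² · 2^{-k}`. -/
theorem qzo_ge_of_nof_protocol (N k : ℕ) (L : Set (Fin N × Fin N × Fin N))
    (hL : IsLatin L) (hcc : Nat.clog 2 (chromatic (tild L) (MMset N)) ≤ k) :
    (N : ℝ) ^ 2 * 2 ^ (-(k : ℝ)) ≤ (QzoMM N : ℝ) := by
  rcases Nat.eq_zero_or_pos N with hN | hN
  · subst hN
    simp only [Nat.cast_zero]
    have : (0:ℝ) ^ 2 * 2 ^ (-(k:ℝ)) = 0 := by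
      rw [zero_pow (by norm_num)]; ring
    rw [this]
    exact Nat.cast_nonneg _
  -- setup
  set X := (Fin N × Fin N) × (Fin N × Fin N) × (Fin N × Fin N) with hX
  set c := chromatic (tild L) (MMset N) with hc
  -- the coloring set is nonempty
  have hne : {j : ℕ | ∃ f : X → Fin j,
      ∀ m : Fin j, IsIndep (tild L) (MMset N) (tild L ∩ f ⁻¹' {m})}.Nonempty := by
    refine ⟨Fintype.card X, (Fintype.equivFin X : X → Fin (Fintype.card X)), fun m => ?_⟩
    refine indep_of_subsingleton L _ Set.inter_subset_left ?_
    intro a ha b hb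
    have : (Fintype.equivFin X) a = (Fintype.equivFin X) b := by
      have h1 := ha.2; have h2 := hb.2
      simp only [Set.mem_preimage, Set.mem_singleton_iff] at h1 h2
      rw [h1, h2]
    exact (Fintype.equivFin X).injective this
  have hmem : c ∈ {j : ℕ | ∃ f : X → Fin j,
      ∀ m : Fin j, IsIndep (tild L) (MMset N) (tild L ∩ f ⁻¹' {m})} := by
    rw [hc]
    exact Nat.sInf_mem hne
  obtain ⟨f, hf⟩ := hmem
  -- c ≤ 2 ^ k
  have hc2 : c ≤ 2 ^ k :=
    le_trans (Nat.le_pow_clog one_lt_two c) (Nat.pow_le_pow_right (by norm_num) hcc)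
  -- c > 0
  have hX0 : Nonempty X := by
    have : Nonempty (Fin N) := ⟨⟨0, hN⟩⟩
    infer_instance
  have hcpos : 0 < c := by
    rcases hX0 with ⟨x0⟩
    exact (f x0).pos
  -- tild L has at least N² elements
  classical
  have hzfun : ∀ x y : Fin N, ∃ z, (x, y, z) ∈ L := fun x y => (hL.1 x y).exists
  choose ζ hζ using hzfun
  set φ : Fin N × Fin N → X := fun p => ((p.1, p.2), (p.2, ζ p.1 p.2), (ζ p.1 p.2, p.1)) with hφ
  have hφinj : Function.Injective φ := by
    intro p q hpq
    have : (p.1, p.2) = (q.1, q.2) := congrArg (fun t => t.1) hpq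
    cases p; cases q
    simpa using this
  have hφsub : Set.range φ ⊆ tild L := by
    rintro t ⟨⟨x, y⟩, rfl⟩
    exact ⟨x, y, ζ x y, hζ x y, rfl⟩
  have hcard1 : N * N ≤ (tild L).ncard := by
    have h1 : (Set.range φ).ncard = N * N := by
      rw [← Set.image_univ, Set.ncard_image_of_injective _ hφinj, Set.ncard_univ]
      simp
    rw [← h1]
    exact Set.ncard_le_ncard hφsub (Set.toFinite _)
  -- finset version of tild L
  set s : Finset X := (Set.toFinite (tild L)).toFinset with hs
  have hscard : s.card = (tild L).ncard := by
    have h : (s : Set X) = tild L := Set.Finite.coe_toFinset _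
    rw [← h, Set.ncard_coe_finset]
  -- pigeonhole
  have hsum : s.card = ∑ m : Fin c, (s.filter fun x => f x = m).card :=
    Finset.card_eq_sum_card_fiberwise (fun x _ => Finset.mem_univ (f x))
  have hpigeon : ∃ m : Fin c, s.card ≤ c * (s.filter fun x => f x = m).card := by
    have huniv : (Finset.univ : Finset (Fin c)).Nonempty := by
      refine Finset.univ_nonempty_iff.2 ?_
      exact ⟨⟨0, hcpos⟩⟩
    have hle : ∑ _m : Fin c, s.card ≤ ∑ m : Fin c, c * (s.filter fun x => f x = m).card := by
      rw [← Finset.mul_sum, ← hsum, Finset.sum_const, Finset.card_univ, Fintype.card_fin,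
        smul_eq_mul]
    obtain ⟨m, _, hm⟩ := Finset.exists_le_of_sum_le huniv hle
    exact ⟨m, hm⟩
  obtain ⟨m, hm⟩ := hpigeon
  -- the fiber as a set
  set S := tild L ∩ f ⁻¹' {m} with hS
  have hfib : S.ncard = (s.filter fun x => f x = m).card := by
    have h : ((s.filter fun x => f x = m : Finset X) : Set X) = S := by
      ext u
      simp only [hS, Finset.coe_filter, Set.mem_setOf_eq, hs, Set.Finite.mem_toFinset,
        Set.mem_inter_iff, Set.mem_preimage, Set.mem_singleton_iff]
    rw [← h, Set.ncard_coe_finset]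
  -- S is independent in (MMset N, MMset N)
  have hSindep : IsIndep (MMset N) (MMset N) S := by
    obtain ⟨h1, h2, h3⟩ := hf m
    exact ⟨h1.trans (tild_subset_MM L), h2, h3⟩
  -- QzoMM bound
  have hQ : S.ncard ≤ QzoMM N := by
    have hbdd : BddAbove {j : ℕ | ∃ S', IsIndep (MMset N) (MMset N) S' ∧ S'.ncard = j} := by
      refine ⟨Fintype.card X, fun j hj => ?_⟩
      obtain ⟨S', _, rfl⟩ := hj
      have := Set.ncard_le_ncard (Set.subset_univ S') (Set.toFinite _)
      rwa [Set.ncard_univ, Nat.card_eq_fintype_card] at this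
    exact le_csSup hbdd ⟨S, hSindep, rfl⟩
  -- combine in ℕ
  have hnat : N * N ≤ 2 ^ k * QzoMM N := by
    calc N * N ≤ (tild L).ncard := hcard1
      _ = s.card := hscard.symm
      _ ≤ c * (s.filter fun x => f x = m).card := hm
      _ = c * S.ncard := by rw [hfib]
      _ ≤ 2 ^ k * QzoMM N := Nat.mul_le_mul hc2 hQ
  -- conclude in ℝ
  have hcast : (N : ℝ) * N ≤ 2 ^ k * (QzoMM N : ℝ) := by exact_mod_cast hnat
  have h2pos : (0:ℝ) < 2 ^ k := by positivity
  rw [Real.rpow_neg (by norm_num), Real.rpow_natCast, ← div_eq_mul_inv, div_le_iff₀ h2pos]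
  nlinarith [hcast]
end

section
/- Any NOF permutation problem with communication complexity d over [N]³ is uniquely determined by a triple of functions κ₁,κ₂,κ₃ : [N]×[N] → {0,1}^d, via the rule: for (a,b,c) in the NOF promise, (a,b,c) is accepting iff κ₁(a)=κ₂(b)=κ₃(c). Consequently, the number of NOF permutation problems over [N]³ with communication complexity at most d is at most 2^{3dN²}. -/
open Set

/-- A proper coloring of the colored tensor `(Ĩ, ⟨N,N,N⟩)` with `2^d` colors, i.e.,
communication complexity at most `d`. -/
def ProperColoring {N : ℕ} (d : ℕ) (L : Set (Fin N × Fin N × Fin N))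
    (τ : (Fin N × Fin N) × (Fin N × Fin N) × (Fin N × Fin N) → Fin (2 ^ d)) : Prop :=
  ∀ m, IsIndep (tild L) (MMset N) (tild L ∩ τ ⁻¹' {m})

/-- Key lemma: membership in `Ĩ` for promised inputs equals equality of the kappas. -/
lemma nof_key {N d : ℕ} (L : Set (Fin N × Fin N × Fin N))
    (τ : (Fin N × Fin N) × (Fin N × Fin N) × (Fin N × Fin N) → Fin (2 ^ d))
    (κ₁ κ₂ κ₃ : Fin N × Fin N → Fin (2 ^ d))
    (hLat : IsLatin L) (hPC : ProperColoring d L τ)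
    (hκ : ∀ x y z : Fin N, (x, y, z) ∈ L →
        κ₁ (x, y) = τ ((x, y), (y, z), (z, x)) ∧
        κ₂ (y, z) = τ ((x, y), (y, z), (z, x)) ∧
        κ₃ (z, x) = τ ((x, y), (y, z), (z, x))) :
    ∀ t ∈ MMset N, (t ∈ tild L ↔ κ₁ t.1 = κ₂ t.2.1 ∧ κ₂ t.2.1 = κ₃ t.2.2) := by
  rintro ⟨⟨x, y⟩, ⟨y₂, z⟩, ⟨z₂, x₂⟩⟩ ht
  obtain ⟨h1, h2, h3⟩ : y = y₂ ∧ z = z₂ ∧ x₂ = x := ht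
  subst h1; subst h2
  obtain rfl : x = x₂ := h3.symm
  constructor
  · rintro ⟨a, b, c, habc, heq⟩
    simp only [Prod.ext_iff] at heq
    obtain ⟨⟨hx, hy⟩, ⟨_, hz⟩, _⟩ := heq
    subst hx hy hz
    obtain ⟨k1, k2, k3⟩ := hκ x y z habc
    exact ⟨k1.trans k2.symm, k2.trans k3.symm⟩
  · rintro ⟨h12, h23⟩
    set m := κ₁ (x, y) with hm
    obtain ⟨z₀, hz₀, -⟩ := hLat.1 x y
    obtain ⟨x₀, hx₀, -⟩ := hLat.2.1 y z
    obtain ⟨y₀, hy₀, -⟩ := hLat.2.2 x z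
    obtain ⟨hsub, -, heq⟩ := hPC m
    have ht1 : ((x, y), (y, z₀), (z₀, x)) ∈ tild L ∩ τ ⁻¹' {m} := by
      refine ⟨⟨x, y, z₀, hz₀, rfl⟩, ?_⟩
      have := (hκ x y z₀ hz₀).1
      simp only [Set.mem_preimage, Set.mem_singleton_iff]
      exact this.symm
    have ht2 : ((x₀, y), (y, z), (z, x₀)) ∈ tild L ∩ τ ⁻¹' {m} := by
      refine ⟨⟨x₀, y, z, hx₀, rfl⟩, ?_⟩
      have := (hκ x₀ y z hx₀).2.1
      simp only [Set.mem_preimage, Set.mem_singleton_iff]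
      rw [← this, ← h12]
    have ht3 : ((x, y₀), (y₀, z), (z, x)) ∈ tild L ∩ τ ⁻¹' {m} := by
      refine ⟨⟨x, y₀, z, hy₀, rfl⟩, ?_⟩
      have := (hκ x y₀ z hy₀).2.2
      simp only [Set.mem_preimage, Set.mem_singleton_iff]
      rw [← this, ← h23, ← h12]
    have hmem : ((x, y), (y, z), (z, x)) ∈
        MMset N ∩ (proj1 (tild L ∩ τ ⁻¹' {m}) ×ˢ
          (proj2 (tild L ∩ τ ⁻¹' {m}) ×ˢ proj3 (tild L ∩ τ ⁻¹' {m}))) := by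
      refine ⟨⟨rfl, rfl, rfl⟩, ⟨_, ht1, rfl⟩, ⟨_, ht2, rfl⟩, ⟨_, ht3, rfl⟩⟩
    rw [heq] at hmem
    exact hsub hmem

noncomputable def kap1 {N d : ℕ} {L : Set (Fin N × Fin N × Fin N)} (hL : IsLatin L)
    (τ : (Fin N × Fin N) × (Fin N × Fin N) × (Fin N × Fin N) → Fin (2 ^ d)) :
    Fin N × Fin N → Fin (2 ^ d) :=
  fun p => τ ((p.1, p.2), (p.2, (hL.1 p.1 p.2).exists.choose), ((hL.1 p.1 p.2).exists.choose, p.1))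

noncomputable def kap2 {N d : ℕ} {L : Set (Fin N × Fin N × Fin N)} (hL : IsLatin L)
    (τ : (Fin N × Fin N) × (Fin N × Fin N) × (Fin N × Fin N) → Fin (2 ^ d)) :
    Fin N × Fin N → Fin (2 ^ d) :=
  fun p => τ (((hL.2.1 p.1 p.2).exists.choose, p.1), (p.1, p.2), (p.2, (hL.2.1 p.1 p.2).exists.choose))

noncomputable def kap3 {N d : ℕ} {L : Set (Fin N × Fin N × Fin N)} (hL : IsLatin L)
    (τ : (Fin N × Fin N) × (Fin N × Fin N) × (Fin N × Fin N) → Fin (2 ^ d)) :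
    Fin N × Fin N → Fin (2 ^ d) :=
  fun p => τ ((p.2, (hL.2.2 p.2 p.1).exists.choose), ((hL.2.2 p.2 p.1).exists.choose, p.1), (p.1, p.2))

lemma kap_spec {N d : ℕ} {L : Set (Fin N × Fin N × Fin N)} (hL : IsLatin L)
    (τ : (Fin N × Fin N) × (Fin N × Fin N) × (Fin N × Fin N) → Fin (2 ^ d)) :
    ∀ x y z : Fin N, (x, y, z) ∈ L →
      kap1 hL τ (x, y) = τ ((x, y), (y, z), (z, x)) ∧
      kap2 hL τ (y, z) = τ ((x, y), (y, z), (z, x)) ∧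
      kap3 hL τ (z, x) = τ ((x, y), (y, z), (z, x)) := by
  intro x y z hxyz
  refine ⟨?_, ?_, ?_⟩
  · have h := (hL.1 x y).exists.choose_spec
    have : (hL.1 x y).exists.choose = z := (hL.1 x y).unique h hxyz
    simp only [kap1, this]
  · have h := (hL.2.1 y z).exists.choose_spec
    have : (hL.2.1 y z).exists.choose = x := (hL.2.1 y z).unique h hxyz
    simp only [kap2, this]
  · have h := (hL.2.2 x z).exists.choose_spec
    have : (hL.2.2 x z).exists.choose = y := (hL.2.2 x z).unique h hxyz
    simp only [kap3, this]

/-- A NOF permutation problem with communication complexity `d` is determined by the triple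
`(κ₁,κ₂,κ₃)`: for inputs in the promise, membership in `Ĩ` is equivalent to
`κ₁(a)=κ₂(b)=κ₃(c)`. Consequently there are at most `2^{3dN²}` NOF permutation problems
over `[N]³` with communication complexity at most `d`. -/
theorem nof_determined_by_kappas (N d : ℕ) :
    (∀ (L : Set (Fin N × Fin N × Fin N))
      (τ : (Fin N × Fin N) × (Fin N × Fin N) × (Fin N × Fin N) → Fin (2 ^ d))
      (κ₁ κ₂ κ₃ : Fin N × Fin N → Fin (2 ^ d)),
      IsLatin L → ProperColoring d L τ →
      (∀ x y z : Fin N, (x, y, z) ∈ L →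
        κ₁ (x, y) = τ ((x, y), (y, z), (z, x)) ∧
        κ₂ (y, z) = τ ((x, y), (y, z), (z, x)) ∧
        κ₃ (z, x) = τ ((x, y), (y, z), (z, x))) →
      ∀ t ∈ MMset N, (t ∈ tild L ↔ κ₁ t.1 = κ₂ t.2.1 ∧ κ₂ t.2.1 = κ₃ t.2.2)) ∧
    {L : Set (Fin N × Fin N × Fin N) | IsLatin L ∧
        ∃ τ, ProperColoring d L τ}.ncard ≤ 2 ^ (3 * d * N ^ 2) := by
  refine ⟨fun L τ κ₁ κ₂ κ₃ hLat hPC hκ => nof_key L τ κ₁ κ₂ κ₃ hLat hPC hκ, ?_⟩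
  set S := {L : Set (Fin N × Fin N × Fin N) | IsLatin L ∧ ∃ τ, ProperColoring d L τ} with hS
  -- injection into triples of kappas
  classical
  let F : S → ((Fin N × Fin N → Fin (2 ^ d)) × (Fin N × Fin N → Fin (2 ^ d)) ×
      (Fin N × Fin N → Fin (2 ^ d))) :=
    fun L => (kap1 L.2.1 L.2.2.choose, kap2 L.2.1 L.2.2.choose, kap3 L.2.1 L.2.2.choose)
  have hFinj : Function.Injective F := by
    rintro ⟨L, hLat, hτ⟩ ⟨L', hLat', hτ'⟩ hFeq
    simp only [F, Prod.ext_iff] at hFeq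
    obtain ⟨e1, e2, e3⟩ := hFeq
    have hmain : ∀ (x y z : Fin N), (x, y, z) ∈ L ↔ (x, y, z) ∈ L' := by
      intro x y z
      have hmm : ((x, y), (y, z), (z, x)) ∈ MMset N := ⟨rfl, rfl, rfl⟩
      have h1 := nof_key L hτ.choose _ _ _ hLat hτ.choose_spec (kap_spec hLat hτ.choose)
        _ hmm
      have h2 := nof_key L' hτ'.choose _ _ _ hLat' hτ'.choose_spec (kap_spec hLat' hτ'.choose)
        _ hmm
      rw [e1, e2, e3] at h1
      have htl : ∀ (M : Set (Fin N × Fin N × Fin N)),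
          ((x, y), (y, z), (z, x)) ∈ tild M ↔ (x, y, z) ∈ M := by
        intro M
        constructor
        · rintro ⟨a, b, c, habc, heq⟩
          simp only [Prod.ext_iff] at heq
          obtain ⟨⟨hx, hy⟩, ⟨-, hz⟩, -⟩ := heq
          subst hx hy hz; exact habc
        · intro h; exact ⟨x, y, z, h, rfl⟩
      rw [htl] at h1 h2
      rw [h1, h2]
    simp only [Subtype.mk_eq_mk]
    ext ⟨x, y, z⟩
    exact hmain x y z
  have hcard : S.ncard ≤ Nat.card ((Fin N × Fin N → Fin (2 ^ d)) ×
      (Fin N × Fin N → Fin (2 ^ d)) × (Fin N × Fin N → Fin (2 ^ d))) :=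
    Nat.card_le_card_of_injective F hFinj
  calc S.ncard ≤ _ := hcard
    _ ≤ 2 ^ (3 * d * N ^ 2) := by
        simp only [Nat.card_eq_fintype_card, Fintype.card_prod, Fintype.card_fun,
          Fintype.card_fin]
        apply le_of_eq
        rw [← pow_add, ← pow_add, ← pow_mul]
        congr 1
        ring
end
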